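/- Let k ≥ 0 and let K ⊆ ℝ³ be a nonempty bounded open set. The space { v ∈ P_{k+1}³ : ∫_K v(x)·w(x) dx = 0 for all w ∈ P_k³ + grad(𝒫̃_{k+2}) } is a linear subspace of P_{k+1}³ of dimension 4·d_{k+1} − 3·d_k − d_{k+2}, where d_j = C(j+3,3). -/

import Mathlib

open MvPolynomial MeasureTheory

/-- The `i`-th partial derivative as a linear map on polynomials in three variables. -/
noncomputable def pd (i : Fin 3) : MvPolynomial (Fin 3) ℝ →ₗ[ℝ] MvPolynomial (Fin 3) ℝ :=
  (pderiv i).toLinearMap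

/-- The gradient of a polynomial, `grad p = (∂₁p, ∂₂p, ∂₃p)`, as a linear map. -/
noncomputable def gradLM : MvPolynomial (Fin 3) ℝ →ₗ[ℝ] (Fin 3 → MvPolynomial (Fin 3) ℝ) :=
  LinearMap.pi fun i => pd i

/-- The curl of a polynomial vector field,
`curl F = (∂₂F₃ − ∂₃F₂, ∂₃F₁ − ∂₁F₃, ∂₁F₂ − ∂₂F₁)`, as a linear map. -/
noncomputable def curlLM : (Fin 3 → MvPolynomial (Fin 3) ℝ) →ₗ[ℝ] (Fin 3 → MvPolynomial (Fin 3) ℝ) :=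
  LinearMap.pi
    ![pd 1 ∘ₗ LinearMap.proj 2 - pd 2 ∘ₗ LinearMap.proj 1,
      pd 2 ∘ₗ LinearMap.proj 0 - pd 0 ∘ₗ LinearMap.proj 2,
      pd 0 ∘ₗ LinearMap.proj 1 - pd 1 ∘ₗ LinearMap.proj 0]

/-- `P_k³`: vector fields whose three components are polynomials of total degree ≤ k. -/
noncomputable def Pvec (k : ℕ) : Submodule ℝ (Fin 3 → MvPolynomial (Fin 3) ℝ) :=
  Submodule.pi Set.univ fun _ => restrictTotalDegree (Fin 3) ℝ k

/-- The `L²(K)` inner product `(F,G)_K = ∫_K F·G dx` of two polynomial vector fields. -/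
noncomputable def ipK (K : Set (Fin 3 → ℝ)) (F G : Fin 3 → MvPolynomial (Fin 3) ℝ) : ℝ :=
  ∫ x in K, ∑ i : Fin 3, eval x (F i) * eval x (G i)

/-! ### Counting monomials -/

/-- Finsupps with given sum are equivalent to `Sym`. -/
noncomputable def symEquiv (α : Type*) [DecidableEq α] (m : ℕ) :
    {e : α →₀ ℕ // (e.sum fun _ x => x) = m} ≃ Sym α m where
  toFun e := ⟨Finsupp.toMultiset e.1, by
    rw [Finsupp.card_toMultiset]; exact e.2⟩
  invFun s := ⟨Multiset.toFinsupp s.1, by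
    have := Finsupp.card_toMultiset (Multiset.toFinsupp s.1)
    rw [Multiset.toFinsupp_toMultiset] at this
    exact this.symm.trans s.2⟩
  left_inv e := by ext : 1; simp
  right_inv s := by ext : 1; simp

noncomputable def funEquiv (α : Type*) [Fintype α] (m : ℕ) :
    {d : α → ℕ // ∑ i, d i = m} ≃ {e : α →₀ ℕ // (e.sum fun _ x => x) = m} :=
  Equiv.subtypeEquiv Finsupp.equivFunOnFinite.symm (by
    intro d
    rw [Finsupp.sum_fintype _ _ (fun _ => rfl)]
    simp [Finsupp.equivFunOnFinite]; rfl)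

noncomputable def slackEquiv (m : ℕ) :
    {d : Fin 3 → ℕ // ∑ i, d i ≤ m} ≃ {d : Fin 4 → ℕ // ∑ i, d i = m} where
  toFun d := ⟨Fin.cons (m - ∑ i, d.1 i) d.1, by
    rw [Fin.sum_cons]; omega⟩
  invFun e := ⟨Fin.tail e.1, by
    have := e.2; rw [← Fin.cons_self_tail e.1, Fin.sum_cons] at this; omega⟩
  left_inv d := by apply Subtype.ext; simp
  right_inv e := by
    have h := e.2; rw [← Fin.cons_self_tail e.1, Fin.sum_cons] at h
    apply Subtype.ext
    simp only
    conv_rhs => rw [← Fin.cons_self_tail e.1]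
    have h2 : m - ∑ x : Fin 3, Fin.tail e.1 x = e.1 0 := by omega
    rw [h2]

noncomputable instance (m : ℕ) : Fintype {d : Fin 4 → ℕ // ∑ i, d i = m} :=
  Fintype.ofEquiv _ ((funEquiv (Fin 4) m).trans (symEquiv (Fin 4) m)).symm

noncomputable instance (m : ℕ) : Fintype {d : Fin 3 → ℕ // ∑ i, d i = m} :=
  Fintype.ofEquiv _ ((funEquiv (Fin 3) m).trans (symEquiv (Fin 3) m)).symm

noncomputable instance (m : ℕ) : Fintype {d : Fin 3 → ℕ // ∑ i, d i ≤ m} :=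
  Fintype.ofEquiv _ (slackEquiv m).symm

theorem card_le_sum (m : ℕ) :
    Nat.card {d : Fin 3 → ℕ // ∑ i, d i ≤ m} = (m + 3).choose 3 := by
  rw [Nat.card_congr ((slackEquiv m).trans
    ((funEquiv (Fin 4) m).trans (symEquiv (Fin 4) m)))]
  rw [Nat.card_eq_fintype_card, Sym.card_sym_eq_multichoose, Nat.multichoose_eq]
  simp only [Fintype.card_fin]
  rw [show 4 + m - 1 = m + 3 by omega, ← Nat.choose_symm (by omega : m ≤ m + 3)]
  congr 1; omega

theorem card_eq_sum (n : ℕ) :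
    Nat.card {d : Fin 3 → ℕ // ∑ i, d i = n} = (n + 2).choose 2 := by
  rw [Nat.card_congr ((funEquiv (Fin 3) n).trans (symEquiv (Fin 3) n))]
  rw [Nat.card_eq_fintype_card, Sym.card_sym_eq_multichoose, Nat.multichoose_eq]
  simp only [Fintype.card_fin]
  rw [show 3 + n - 1 = n + 2 by omega, ← Nat.choose_symm (by omega : n ≤ n + 2)]
  congr 1; omega

open Module

noncomputable def setEquivLe (m : ℕ) :
    ↥{n : Fin 3 →₀ ℕ | (n.sum fun _ e => e) ≤ m} ≃ {d : Fin 3 → ℕ // ∑ i, d i ≤ m} :=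
  Equiv.subtypeEquiv Finsupp.equivFunOnFinite (fun n => by
    rw [Set.mem_setOf_eq, Finsupp.sum_fintype _ _ fun _ => rfl]
    simp [Finsupp.equivFunOnFinite])

theorem degree_eq_sum (d : Fin 3 →₀ ℕ) : d.degree = ∑ i, d i := by
  rw [Finsupp.degree]
  exact Finset.sum_subset (Finset.subset_univ _)
    (fun x _ hx => Finsupp.notMem_support_iff.mp hx)

noncomputable def setEquivEq (n : ℕ) :
    ↥{d : Fin 3 →₀ ℕ | d.degree = n} ≃ {d : Fin 3 → ℕ // ∑ i, d i = n} :=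
  Equiv.subtypeEquiv Finsupp.equivFunOnFinite (fun d => by
    rw [Set.mem_setOf_eq, degree_eq_sum]
    simp [Finsupp.equivFunOnFinite])

theorem finrank_rtd (m : ℕ) :
    finrank ℝ (restrictTotalDegree (Fin 3) ℝ m) = (m + 3).choose 3 := by
  haveI : Fintype ↥{n : Fin 3 →₀ ℕ | (n.sum fun _ e => e) ≤ m} :=
    Fintype.ofEquiv _ (setEquivLe m).symm
  have h1 : finrank ℝ (restrictTotalDegree (Fin 3) ℝ m) =
      Fintype.card ↥{n : Fin 3 →₀ ℕ | (n.sum fun _ e => e) ≤ m} :=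
    finrank_eq_card_basis (MvPolynomial.basisRestrictSupport ℝ _)
  rw [h1, ← card_le_sum m, Nat.card_eq_fintype_card]
  exact Fintype.card_congr (setEquivLe m)

theorem finrank_homog (n : ℕ) :
    finrank ℝ (MvPolynomial.homogeneousSubmodule (Fin 3) ℝ n) = (n + 2).choose 2 := by
  haveI : Fintype ↥{d : Fin 3 →₀ ℕ | d.degree = n} :=
    Fintype.ofEquiv _ (setEquivEq n).symm
  rw [MvPolynomial.homogeneousSubmodule_eq_finsupp_supported]
  have h1 : finrank ℝ (AddMonoidAlgebra.supported ℝ ℝ {d : Fin 3 →₀ ℕ | d.degree = n}) =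
      Fintype.card ↥{d : Fin 3 →₀ ℕ | d.degree = n} :=
    finrank_eq_card_basis (MvPolynomial.basisRestrictSupport ℝ _)
  exact h1.trans (by
    rw [← card_eq_sum n, Nat.card_eq_fintype_card]
    exact Fintype.card_congr (setEquivEq n))

instance homogFD (n : ℕ) :
    FiniteDimensional ℝ (MvPolynomial.homogeneousSubmodule (Fin 3) ℝ n) := by
  haveI : Fintype ↥{d : Fin 3 →₀ ℕ | d.degree = n} :=
    Fintype.ofEquiv _ (setEquivEq n).symm
  rw [MvPolynomial.homogeneousSubmodule_eq_finsupp_supported]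
  exact Module.Finite.of_basis (MvPolynomial.basisRestrictSupport ℝ {d | d.degree = n})

noncomputable def pieq (Q : Submodule ℝ (MvPolynomial (Fin 3) ℝ)) :
    (Fin 3 → ↥Q) ≃ₗ[ℝ] ↥(Submodule.pi Set.univ fun _ : Fin 3 => Q) where
  toFun f := ⟨fun i => (f i : MvPolynomial (Fin 3) ℝ), fun i _ => (f i).2⟩
  map_add' _ _ := rfl
  map_smul' _ _ := rfl
  invFun v := fun i => ⟨v.1 i, Submodule.mem_pi.mp v.2 i (Set.mem_univ i)⟩
  left_inv _ := rfl
  right_inv _ := rfl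

instance PvecFD (k : ℕ) : FiniteDimensional ℝ (Pvec k) :=
  Module.Finite.equiv (pieq (restrictTotalDegree (Fin 3) ℝ k))

theorem finrank_Pvec (k : ℕ) : finrank ℝ (Pvec k) = 3 * (k + 3).choose 3 := by
  have h : finrank ℝ (Pvec k)
      = finrank ℝ (Fin 3 → restrictTotalDegree (Fin 3) ℝ k) :=
    ((pieq (restrictTotalDegree (Fin 3) ℝ k)).finrank_eq).symm
  haveI : Module.Free ℝ (restrictTotalDegree (Fin 3) ℝ k) :=
    Module.Free.of_basis (MvPolynomial.basisRestrictSupport ℝ _)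
  rw [h, finrank_pi_fintype, Finset.sum_const, Finset.card_univ, Fintype.card_fin,
    smul_eq_mul, finrank_rtd]

/-! ### Integration -/

variable {K : Set (Fin 3 → ℝ)}

theorem integrableOn_eval (hKb : Bornology.IsBounded K) (p : MvPolynomial (Fin 3) ℝ) :
    IntegrableOn (fun x => eval x p) K volume :=
  (((MvPolynomial.continuous_eval p).continuousOn).integrableOn_compact
    hKb.isCompact_closure).mono_set subset_closure

theorem integrableOn_ip (hKb : Bornology.IsBounded K)
    (F G : Fin 3 → MvPolynomial (Fin 3) ℝ) :
    IntegrableOn (fun x => ∑ i : Fin 3, eval x (F i) * eval x (G i)) K volume := by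
  have : (fun x => ∑ i : Fin 3, eval x (F i) * eval x (G i))
      = fun x => eval x (∑ i : Fin 3, F i * G i) := by
    funext x; simp [map_sum]
  rw [this]; exact integrableOn_eval hKb _

theorem ipK_add_left (hKb : Bornology.IsBounded K)
    (F F' G : Fin 3 → MvPolynomial (Fin 3) ℝ) :
    ipK K (F + F') G = ipK K F G + ipK K F' G := by
  unfold ipK
  rw [← integral_add (integrableOn_ip hKb F G) (integrableOn_ip hKb F' G)]
  congr 1; funext x
  simp [Finset.sum_add_distrib, add_mul]

theorem ipK_smul_left (c : ℝ) (F G : Fin 3 → MvPolynomial (Fin 3) ℝ) :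
    ipK K (c • F) G = c * ipK K F G := by
  unfold ipK
  have h := integral_smul (μ := volume.restrict K) c
    (fun x => ∑ i : Fin 3, eval x (F i) * eval x (G i))
  rw [smul_eq_mul] at h
  rw [← h]
  congr 1; funext x
  simp [Finset.smul_sum, smul_eq_mul, Finset.mul_sum, mul_assoc]

theorem ipK_comm (F G : Fin 3 → MvPolynomial (Fin 3) ℝ) : ipK K F G = ipK K G F := by
  unfold ipK; congr 1; funext x; congr 1; funext i; ring

/-- `ipK` as a bilinear map. -/
noncomputable def ipB (hKb : Bornology.IsBounded K) :
    (Fin 3 → MvPolynomial (Fin 3) ℝ) →ₗ[ℝ] (Fin 3 → MvPolynomial (Fin 3) ℝ) →ₗ[ℝ] ℝ :=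
  LinearMap.mk₂ ℝ (ipK K) (ipK_add_left hKb) (ipK_smul_left)
    (fun F G G' => by rw [ipK_comm, ipK_add_left hKb, ipK_comm G F, ipK_comm G' F])
    (fun c F G => by rw [ipK_comm, ipK_smul_left, ipK_comm G F]; rfl)

theorem poly_eq_zero_of_vanish (hKo : IsOpen K) (hKne : K.Nonempty)
    {p : MvPolynomial (Fin 3) ℝ} (h : ∀ x ∈ K, eval x p = 0) : p = 0 := by
  obtain ⟨x₀, hx₀⟩ := hKne
  have han : AnalyticOnNhd ℝ (fun x : Fin 3 → ℝ => eval x p) Set.univ :=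
    AnalyticOnNhd.eval_continuousLinearMap (ContinuousLinearMap.id ℝ (Fin 3 → ℝ)) p
  have hev : (fun x : Fin 3 → ℝ => eval x p) =ᶠ[nhds x₀] 0 := by
    filter_upwards [hKo.mem_nhds hx₀] with x hx
    exact h x hx
  have := han.eqOn_zero_of_preconnected_of_eventuallyEq_zero
    isPreconnected_univ (Set.mem_univ x₀) hev
  exact MvPolynomial.funext fun x => by simpa using this (Set.mem_univ x)

theorem ipK_self_eq_zero (hKo : IsOpen K) (hKne : K.Nonempty) (hKb : Bornology.IsBounded K)
    {v : Fin 3 → MvPolynomial (Fin 3) ℝ} (hv : ipK K v v = 0) : v = 0 := by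
  set f : (Fin 3 → ℝ) → ℝ := fun x => ∑ i : Fin 3, eval x (v i) * eval x (v i) with hf
  have hnn : ∀ x, 0 ≤ f x := fun x => Finset.sum_nonneg fun i _ => mul_self_nonneg _
  have hint : IntegrableOn f K volume := integrableOn_ip hKb v v
  have hae : f =ᶠ[ae (volume.restrict K)] 0 := by
    rw [← integral_eq_zero_iff_of_nonneg hnn hint]
    exact hv
  have hfK : ∀ x ∈ K, f x = 0 := by
    by_contra hc
    push_neg at hc
    obtain ⟨x₀, hx₀, hfx₀⟩ := hc
    have hopen : IsOpen ({x | f x ≠ 0} ∩ K) :=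
      (isOpen_ne.preimage (by continuity)).inter hKo
    have hne : ({x | f x ≠ 0} ∩ K).Nonempty := ⟨x₀, hfx₀, hx₀⟩
    have hzero : volume ({x | f x ≠ 0} ∩ K) = 0 := by
      have h0 : volume.restrict K {x | f x ≠ 0} = 0 := by
        have h1 := hae
        rw [Filter.EventuallyEq, ae_iff] at h1
        simpa using h1
      rw [← Measure.restrict_apply' hKo.measurableSet]
      exact h0
    exact (hopen.measure_ne_zero volume hne) hzero
  have hcomp : ∀ i x, x ∈ K → eval x (v i) = 0 := by
    intro i x hx
    have h1 := hfK x hx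
    have h2 : ∀ j ∈ Finset.univ, (0:ℝ) ≤ eval x (v j) * eval x (v j) :=
      fun j _ => mul_self_nonneg _
    have := (Finset.sum_eq_zero_iff_of_nonneg h2).mp h1 i (Finset.mem_univ i)
    nlinarith [this]
  funext i
  exact poly_eq_zero_of_vanish hKo hKne (fun x hx => hcomp i x hx)

/-! ### Derivatives of homogeneous polynomials -/

theorem coeff_pderiv (i : Fin 3) (p : MvPolynomial (Fin 3) ℝ) (m : Fin 3 →₀ ℕ) :
    coeff m (pderiv i p) = ((m i : ℝ) + 1) * coeff (m + Finsupp.single i 1) p := by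
  induction p using MvPolynomial.induction_on' with
  | monomial s a =>
    rw [pderiv_monomial, coeff_monomial, coeff_monomial]
    by_cases hs : s i = 0
    · have h1 : ¬ s = m + Finsupp.single i 1 := by
        intro h; apply absurd hs
        rw [h]; simp
      rw [if_neg h1, hs]
      simp
    · by_cases h2 : s = m + Finsupp.single i 1
      · subst h2
        have h3 : (m + Finsupp.single i 1) - Finsupp.single i 1 = m := by
          ext j; by_cases hj : j = i <;> simp [hj]
        rw [if_pos h3, if_pos rfl]
        simp
        ring
      · have h3 : ¬ s - Finsupp.single i 1 = m := by
          intro h; apply h2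
          ext j
          have hpt := DFunLike.congr_fun h j
          by_cases hj : j = i
          · subst hj
            simp [Finsupp.sub_apply] at hpt
            simp
            omega
          · simp [Finsupp.sub_apply, Finsupp.single_apply, Ne.symm hj, hj] at hpt ⊢
            omega
        rw [if_neg h3, if_neg h2, mul_zero]
  | add p q hp hq => simp [map_add, hp, hq, mul_add]

theorem pderiv_mem_homog {n : ℕ} {p : MvPolynomial (Fin 3) ℝ}
    (hp : p ∈ homogeneousSubmodule (Fin 3) ℝ (n + 1)) (i : Fin 3) :
    pderiv i p ∈ homogeneousSubmodule (Fin 3) ℝ n := by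
  rw [mem_homogeneousSubmodule] at hp ⊢
  intro d hd
  rw [coeff_pderiv] at hd
  have h2 : coeff (d + Finsupp.single i 1) p ≠ 0 := by
    intro h; rw [h, mul_zero] at hd; exact hd rfl
  have h3 := hp h2
  have h4 : (Finsupp.weight 1) (d + Finsupp.single i 1)
      = (Finsupp.weight 1) d + 1 := by
    rw [map_add]
    congr 1
    simp [Finsupp.weight_apply, Finsupp.sum_single_index]
  rw [h4] at h3
  omega

theorem grad_zero_of_homog {n : ℕ} {p : MvPolynomial (Fin 3) ℝ}
    (hp : p ∈ homogeneousSubmodule (Fin 3) ℝ (n + 1))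
    (h : ∀ i, pderiv i p = 0) : p = 0 := by
  ext d
  rw [coeff_zero]
  by_cases hd : d = 0
  · subst hd
    exact (mem_homogeneousSubmodule _ _).mp hp |>.coeff_eq_zero (by simp [Finsupp.degree])
  · obtain ⟨i, hi⟩ : ∃ i, d i ≠ 0 := by
      by_contra hc; push_neg at hc
      exact hd (Finsupp.ext fun j => hc j)
    have h1 := coeff_pderiv i p (d - Finsupp.single i 1)
    rw [h i, coeff_zero] at h1
    have h2 : d - Finsupp.single i 1 + Finsupp.single i 1 = d := by
      ext j
      rw [Finsupp.add_apply, Finsupp.tsub_apply, Finsupp.single_apply]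
      by_cases hj : i = j
      · subst hj; simp; omega
      · simp [hj]
    rw [h2] at h1
    have h3 : ((((d - Finsupp.single i 1 : Fin 3 →₀ ℕ)) i : ℝ)) + 1 ≠ 0 :=
      Nat.cast_add_one_ne_zero _
    exact (mul_eq_zero.mp h1.symm).resolve_left h3

theorem totalDegree_le_of_homog {n : ℕ} {p : MvPolynomial (Fin 3) ℝ}
    (hp : p ∈ homogeneousSubmodule (Fin 3) ℝ n) : p.totalDegree ≤ n := by
  by_cases h : p = 0
  · simp [h]
  · exact le_of_eq (((mem_homogeneousSubmodule _ _).mp hp).totalDegree h)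

/-! ### Structure of the spaces -/

theorem mem_Pvec_iff {k : ℕ} {v : Fin 3 → MvPolynomial (Fin 3) ℝ} :
    v ∈ Pvec k ↔ ∀ i, (v i).totalDegree ≤ k := by
  constructor
  · intro hv i
    exact (mem_restrictTotalDegree _ _ _).mp (Submodule.mem_pi.mp hv i (Set.mem_univ i))
  · intro hv
    exact Submodule.mem_pi.mpr fun i _ => (mem_restrictTotalDegree _ _ _).mpr (hv i)

theorem Pvec_mono {k : ℕ} : Pvec k ≤ Pvec (k + 1) := by
  intro v hv
  rw [mem_Pvec_iff] at hv ⊢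
  exact fun i => (hv i).trans (Nat.le_succ k)

theorem grad_image_le (k : ℕ) :
    Submodule.map gradLM (homogeneousSubmodule (Fin 3) ℝ (k + 2)) ≤ Pvec (k + 1) := by
  rintro w ⟨p, hp, rfl⟩
  rw [mem_Pvec_iff]
  intro i
  exact totalDegree_le_of_homog (pderiv_mem_homog hp i)

theorem W_le_V (k : ℕ) :
    Pvec k ⊔ Submodule.map gradLM (homogeneousSubmodule (Fin 3) ℝ (k + 2)) ≤ Pvec (k + 1) :=
  sup_le Pvec_mono (grad_image_le k)

theorem inf_eq_bot (k : ℕ) :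
    Pvec k ⊓ Submodule.map gradLM (homogeneousSubmodule (Fin 3) ℝ (k + 2)) = ⊥ := by
  rw [eq_bot_iff]
  rintro w ⟨hw1, p, hp, rfl⟩
  rw [Submodule.mem_bot]
  funext i
  have hdeg : (gradLM p i).totalDegree ≤ k := (mem_Pvec_iff.mp hw1) i
  have hhom : gradLM p i ∈ homogeneousSubmodule (Fin 3) ℝ (k + 1) := pderiv_mem_homog hp i
  by_contra hne
  have := ((mem_homogeneousSubmodule _ _).mp hhom).totalDegree hne
  omega

theorem grad_inj_on_homog (k : ℕ) :
    Function.Injective (gradLM ∘ₗ (homogeneousSubmodule (Fin 3) ℝ (k + 2)).subtype) := by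
  rw [← LinearMap.ker_eq_bot, eq_bot_iff]
  rintro ⟨p, hp⟩ hker
  rw [LinearMap.mem_ker] at hker
  rw [Submodule.mem_bot]
  apply Subtype.ext
  exact grad_zero_of_homog hp fun i => congrFun hker i

theorem finrank_W (k : ℕ) :
    finrank ℝ
      ↥(Pvec k ⊔ Submodule.map gradLM (homogeneousSubmodule (Fin 3) ℝ (k + 2)))
      = 3 * (k + 3).choose 3 + (k + 4).choose 2 := by
  haveI : FiniteDimensional ℝ
      ↥(Submodule.map gradLM (homogeneousSubmodule (Fin 3) ℝ (k + 2))) :=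
    Module.Finite.map _ _
  have h := Submodule.finrank_sup_add_finrank_inf_eq (Pvec k)
    (Submodule.map gradLM (homogeneousSubmodule (Fin 3) ℝ (k + 2)))
  rw [inf_eq_bot k, finrank_bot, add_zero] at h
  rw [h, finrank_Pvec]
  congr 1
  have hmap : Submodule.map gradLM (homogeneousSubmodule (Fin 3) ℝ (k + 2))
      = LinearMap.range (gradLM ∘ₗ (homogeneousSubmodule (Fin 3) ℝ (k + 2)).subtype) := by
    rw [LinearMap.range_comp, Submodule.range_subtype]
  rw [hmap, LinearMap.finrank_range_of_inj (grad_inj_on_homog k), finrank_homog]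

/-! ### Main theorem -/

/-- On a nonempty bounded open set `K ⊆ ℝ³`, the set
`{ v ∈ P_{k+1}³ : (v, w)_K = 0 for all w ∈ P_k³ + grad(𝒫̃_{k+2}) }` is a linear subspace
of `P_{k+1}³` of dimension `4·d_{k+1} − 3·d_k − d_{k+2}` (stated additively),
`d_j = C(j+3,3)`. -/
theorem stmt7 (k : ℕ) (K : Set (Fin 3 → ℝ)) (hKo : IsOpen K) (hKne : K.Nonempty)
    (hKb : Bornology.IsBounded K) :
    ∃ S : Submodule ℝ (Fin 3 → MvPolynomial (Fin 3) ℝ),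
      (S : Set (Fin 3 → MvPolynomial (Fin 3) ℝ))
        = {v | v ∈ Pvec (k + 1) ∧
            ∀ w ∈ Pvec k ⊔ Submodule.map gradLM (homogeneousSubmodule (Fin 3) ℝ (k + 2)),
              ipK K v w = 0} ∧
      S ≤ Pvec (k + 1) ∧
      Module.finrank ℝ S + 3 * Nat.choose (k + 3) 3 + Nat.choose (k + 2 + 3) 3
        = 4 * Nat.choose (k + 1 + 3) 3 := by
  classical
  set V := Pvec (k + 1) with hV
  set W := Pvec k ⊔ Submodule.map gradLM (homogeneousSubmodule (Fin 3) ℝ (k + 2)) with hW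
  have hWV : W ≤ V := W_le_V k
  haveI : FiniteDimensional ℝ V := PvecFD (k + 1)
  haveI : FiniteDimensional ℝ W := Submodule.finiteDimensional_of_le hWV
  set B := ipB hKb with hB
  -- the orthogonality functional
  set Φ : ↥V →ₗ[ℝ] Module.Dual ℝ ↥W :=
    { toFun := fun v => (B v.1).domRestrict W
      map_add' := by intro a b; ext w; simp
      map_smul' := by intro c a; ext w; simp } with hΦ
  set Ψ : ↥W →ₗ[ℝ] Module.Dual ℝ ↥W :=
    { toFun := fun w => (B w.1).domRestrict W
      map_add' := by intro a b; ext w; simp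
      map_smul' := by intro c a; ext w; simp } with hΨdef
  have hΨinj : Function.Injective Ψ := by
    intro a b hab
    have h0 := DFunLike.congr_fun hab (⟨a.1 - b.1, sub_mem a.2 b.2⟩ : ↥W)
    simp only [hΨdef, LinearMap.coe_mk, AddHom.coe_mk, LinearMap.domRestrict_apply] at h0
    have h1 : B (a.1 - b.1) (a.1 - b.1) = 0 := by
      have e : B (a.1 - b.1) = B a.1 - B b.1 := map_sub B a.1 b.1
      rw [e, LinearMap.sub_apply, h0, sub_self]
    have h2 : a.1 - b.1 = 0 := ipK_self_eq_zero hKo hKne hKb h1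
    exact Subtype.ext (sub_eq_zero.mp h2)
  have hΨ : Function.Surjective Ψ :=
    (LinearMap.injective_iff_surjective_of_finrank_eq_finrank
      Subspace.dual_finrank_eq.symm).mp hΨinj
  have hΦsurj : Function.Surjective Φ := by
    intro φ
    obtain ⟨w, hw⟩ := hΨ φ
    exact ⟨Submodule.inclusion hWV w, hw⟩
  refine ⟨Submodule.map V.subtype (LinearMap.ker Φ), ?_, ?_, ?_⟩
  · ext v
    simp only [SetLike.mem_coe, Submodule.mem_map, Set.mem_setOf_eq]
    constructor
    · rintro ⟨⟨x, hxV⟩, hker, rfl⟩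
      refine ⟨hxV, fun w hw => ?_⟩
      have h0 := DFunLike.congr_fun (LinearMap.mem_ker.mp hker) (⟨w, hw⟩ : ↥W)
      simp only [hΦ, LinearMap.coe_mk, AddHom.coe_mk, LinearMap.domRestrict_apply,
        LinearMap.zero_apply] at h0
      exact h0
    · rintro ⟨hv, hperp⟩
      refine ⟨⟨v, hv⟩, LinearMap.mem_ker.mpr (LinearMap.ext fun w => ?_), rfl⟩
      simp only [hΦ, LinearMap.coe_mk, AddHom.coe_mk, LinearMap.domRestrict_apply,
        LinearMap.zero_apply]
      exact hperp w.1 w.2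
  · exact Submodule.map_subtype_le V _
  · have hrank := LinearMap.finrank_range_add_finrank_ker Φ
    rw [LinearMap.range_eq_top.mpr hΦsurj, finrank_top, Subspace.dual_finrank_eq] at hrank
    rw [Submodule.finrank_map_subtype_eq]
    have hVr : finrank ℝ ↥V = 3 * (k + 1 + 3).choose 3 := finrank_Pvec (k + 1)
    have hWr : finrank ℝ ↥W = 3 * (k + 3).choose 3 + (k + 4).choose 2 := finrank_W k
    have hpascal : (k + 2 + 3).choose 3 = (k + 4).choose 2 + (k + 4).choose 3 := by
      show (k + 4 + 1).choose (2 + 1) = _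
      rw [Nat.choose_succ_succ]
    have h14 : (k + 1 + 3).choose 3 = (k + 4).choose 3 := by norm_num
    omega
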